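/- arXiv:1212.4337 — 2 statements merged into one kernel-verified Lean document; each statement's English description precedes it below -/
import Mathlib

section
/- Let T: X → X be continuous on a compact metric space, Y a vector space with linearly compatible metric, and Ξ: M(X) → Y continuous and affine. Define Λ(y,φ) = sup{ h(T,μ) + ∫φ dμ : μ ∈ M(X,T), Ξμ = y } for y ∈ Ξ(M(X,T)) and Λ(y,φ) = −∞ otherwise, where φ ∈ C(X,ℝ). Then for any subset C ⊂ Y, inf_{y∈C} Λ(y,φ) = inf_{y ∈ co(C)} Λ(y,φ), where co(C) is the convex hull of C. -/
/-!
`Λ(·, φ)` is quasi-concave, and superlevel sets of a quasi-concave function are convex, so the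
infimum over `C` is already an infimum over `co(C)`. For quasi-concavity take invariant `μ`, `ν`
with `Ξ μ = y₁`, `Ξ ν = y₂`: the combination `t μ + (1 - t) ν` is invariant, lies over
`t y₁ + (1 - t) y₂` by affinity of `Ξ`, and its free energy `h + ∫ φ` is at least
`t · (free energy of μ) + (1 - t) · (free energy of ν) ≥ min`. Only the easy half of the
affinity of entropy is needed: concavity, which follows from concavity of `-x log x` applied
to a common refinement of two partitions.
-/
open MeasureTheory Filter Topology Set
open scoped ENNReal

noncomputable section

/-- The `n`-th (here: `(n+1)`-st) empirical measure
`L_{n+1} x = (1/(n+1)) Σ_{k=0}^{n} δ_{T^k x}` as a Borel probability measure. -/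
noncomputable def empPM {X : Type*} [MeasurableSpace X] (T : X → X) (x : X) (n : ℕ) :
    ProbabilityMeasure X :=
  ⟨((n + 1 : ℝ≥0∞))⁻¹ • ∑ k ∈ Finset.range (n + 1), Measure.dirac (T^[k] x), by
    constructor
    rw [Measure.smul_apply, Measure.coe_finset_sum, Finset.sum_apply]
    simp only [measure_univ, Finset.sum_const, Finset.card_range, nsmul_eq_mul, mul_one]
    rw [smul_eq_mul]
    have h1 : ((n : ℝ≥0∞) + 1) ≠ 0 := by simp
    have h2 : ((n : ℝ≥0∞) + 1) ≠ ⊤ := by simp [ENNReal.add_ne_top]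
    rw [show ((n + 1 : ℕ) : ℝ≥0∞) = (n : ℝ≥0∞) + 1 by push_cast; ring]
    exact ENNReal.inv_mul_cancel h1 h2⟩

/-- The set of accumulation (cluster) points of a sequence. -/
def accPts {Y : Type*} [TopologicalSpace Y] (u : ℕ → Y) : Set Y :=
  {p | MapClusterPt p atTop u}

/-- `μ` is a `T`-invariant probability measure. -/
def InvMeas {X : Type*} [MeasurableSpace X] (T : X → X) (μ : ProbabilityMeasure X) : Prop :=
  (μ : Measure X).map T = (μ : Measure X)

/-- Entropy `H_μ` of the refined partition `⋁_{j=0}^{m-1} T^{-j} P` determined by a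
finite measurable partition coded by `P : X → Fin k`. -/
noncomputable def partitionH {X : Type*} [MeasurableSpace X] (T : X → X) (μ : Measure X)
    {k : ℕ} (P : X → Fin k) (m : ℕ) : ℝ :=
  ∑ s : Fin m → Fin k,
    Real.negMulLog ((μ {x | ∀ j : Fin m, P (T^[(j : ℕ)] x) = s j}).toReal)

/-- Kolmogorov–Sinai (measure-theoretic) entropy `h(T,μ)`: the supremum over finite
measurable partitions of `lim_n (1/n) H_μ(⋁_{j<n} T^{-j}P)`; by subadditivity
(Fekete) the limit equals the infimum. -/
noncomputable def entropyKS {X : Type*} [MeasurableSpace X] (T : X → X) (μ : Measure X) :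
    ℝ≥0∞ :=
  ⨆ (k : ℕ) (P : X → Fin k) (_ : Measurable P),
    ⨅ n : ℕ, ENNReal.ofReal (partitionH T μ P (n + 1) / (n + 1))

/-- `Λ(y,φ) = sup { h(T,μ) + ∫ φ dμ : μ ∈ M(X,T), Ξ μ = y }`, with value `⊥ = -∞`
when no invariant measure is mapped to `y` by `Ξ`. -/
noncomputable def Lam {X Y : Type*} [MeasurableSpace X] (T : X → X)
    (Ξ : ProbabilityMeasure X → Y) (φ : X → ℝ) (y : Y) : EReal :=
  ⨆ (μ : ProbabilityMeasure X) (_ : InvMeas T μ ∧ Ξ μ = y),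
    ((entropyKS T (μ : Measure X) : ℝ≥0∞) : EReal) + ((∫ x, φ x ∂(μ : Measure X) : ℝ) : EReal)

end
open scoped ENNReal

/-- The convex combination `t μ + (1-t) ν` of two probability measures, `0 ≤ t ≤ 1`. -/
noncomputable def combPM {X : Type*} [MeasurableSpace X] (t : NNReal) (ht : t ≤ 1)
    (μ ν : MeasureTheory.ProbabilityMeasure X) : MeasureTheory.ProbabilityMeasure X :=
  ⟨(t : ℝ≥0∞) • (μ : MeasureTheory.Measure X) +
      (((1 - t : NNReal)) : ℝ≥0∞) • (ν : MeasureTheory.Measure X), by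
    constructor
    simp only [MeasureTheory.Measure.add_apply, MeasureTheory.Measure.smul_apply,
      MeasureTheory.measure_univ, smul_eq_mul, mul_one]
    rw [← ENNReal.coe_add, add_tsub_cancel_of_le ht]
    rfl⟩



open scoped NNReal

lemma Real.negMulLog_sum_le {ι : Type*} (s : Finset ι) {f : ι → ℝ} (hf : ∀ i ∈ s, 0 ≤ f i) :
    Real.negMulLog (∑ i ∈ s, f i) ≤ ∑ i ∈ s, Real.negMulLog (f i) := by
  rw [Real.negMulLog, neg_mul, Finset.sum_mul, ← Finset.sum_neg_distrib]
  refine Finset.sum_le_sum fun i hi => ?_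
  rcases (hf i hi).eq_or_lt with h0 | h0
  · simp [← h0]
  · rw [Real.negMulLog, neg_mul, neg_le_neg_iff]
    exact mul_le_mul_of_nonneg_left (Real.log_le_log h0 (Finset.single_le_sum hf hi)) h0.le

section PartitionEntropy

variable {X : Type*} [MeasurableSpace X] {T : X → X}

lemma measurableSet_partitionCell (hT : Measurable T) {k m : ℕ} {P : X → Fin k}
    (hP : Measurable P) (s : Fin m → Fin k) :
    MeasurableSet {x | ∀ j : Fin m, P (T^[(j : ℕ)] x) = s j} := by
  rw [ofPred_forall]
  exact .iInter fun j => (hP.comp (hT.iterate _)) (measurableSet_singleton _)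

lemma partitionH_nonneg (μ : Measure X) [IsProbabilityMeasure μ] {k : ℕ} (P : X → Fin k)
    (m : ℕ) : 0 ≤ partitionH T μ P m :=
  Finset.sum_nonneg fun _ _ => Real.negMulLog_nonneg ENNReal.toReal_nonneg
    (ENNReal.toReal_le_of_le_ofReal zero_le_one (by simpa using prob_le_one))

lemma partitionH_le_of_factor (hT : Measurable T) (μ : Measure X) [IsFiniteMeasure μ]
    {k r : ℕ} {R : X → Fin r} (hR : Measurable R) (π : Fin r → Fin k) (m : ℕ) :
    partitionH T μ (π ∘ R) m ≤ partitionH T μ R m := by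
  set cell : (Fin m → Fin r) → Set X := fun u => {x | ∀ j : Fin m, R (T^[(j : ℕ)] x) = u j}
  have hcell : ∀ s : Fin m → Fin k, {x | ∀ j : Fin m, (π ∘ R) (T^[(j : ℕ)] x) = s j}
      = ⋃ u ∈ Finset.univ.filter (fun u => π ∘ u = s), cell u := by
    intro s
    ext x
    simp only [cell, Function.comp_apply, mem_ofPred_eq, mem_iUnion, Finset.mem_filter,
      Finset.mem_univ, true_and, exists_prop]
    constructor
    · exact fun h => ⟨fun j => R (T^[(j : ℕ)] x), funext h, fun j => rfl⟩
    · rintro ⟨u, rfl, hxu⟩ j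
      simp [hxu j]
  have hdisj : ∀ s : Fin m → Fin k,
      (Finset.univ.filter (fun u => π ∘ u = s) : Set (Fin m → Fin r)).PairwiseDisjoint cell :=
    fun s u _ v _ huv => disjoint_left.2 fun x hxu hxv =>
      huv (funext fun j => (hxu j).symm.trans (hxv j))
  unfold partitionH
  rw [← Finset.sum_fiberwise Finset.univ (fun u => π ∘ u)]
  refine Finset.sum_le_sum fun s _ => ?_
  rw [hcell, measure_biUnion_finset (hdisj s) fun u _ => measurableSet_partitionCell hT hR u,
    ENNReal.toReal_sum fun u _ => measure_ne_top μ _]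
  exact Real.negMulLog_sum_le _ fun _ _ => ENNReal.toReal_nonneg

lemma partitionH_combination_ge (μ ν : Measure X) [IsFiniteMeasure μ] [IsFiniteMeasure ν]
    {a b : ℝ≥0} (hab : a + b = 1) {k : ℕ} (P : X → Fin k) (m : ℕ) :
    a * partitionH T μ P m + b * partitionH T ν P m
      ≤ partitionH T ((a : ℝ≥0∞) • μ + (b : ℝ≥0∞) • ν) P m := by
  unfold partitionH
  rw [Finset.mul_sum, Finset.mul_sum, ← Finset.sum_add_distrib]
  refine Finset.sum_le_sum fun s _ => ?_
  set A := {x | ∀ j : Fin m, P (T^[(j : ℕ)] x) = s j}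
  have hA : (((a : ℝ≥0∞) • μ + (b : ℝ≥0∞) • ν) A).toReal = a * (μ A).toReal + b * (ν A).toReal := by
    simp only [Measure.add_apply, Measure.smul_apply, smul_eq_mul]
    rw [ENNReal.toReal_add (by finiteness) (by finiteness), ENNReal.toReal_mul,
      ENNReal.toReal_mul, ENNReal.coe_toReal, ENNReal.coe_toReal]
  rw [hA]
  exact Real.concaveOn_negMulLog.2 ENNReal.toReal_nonneg ENNReal.toReal_nonneg a.2 b.2
    (by exact_mod_cast hab)

/-- The entropy `h(T, μ, P)` of `T` relative to the partition `P`. -/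
noncomputable def partitionEntropyRate (T : X → X) (μ : Measure X) {k : ℕ} (P : X → Fin k) : ℝ≥0∞ :=
  ⨅ n : ℕ, ENNReal.ofReal (partitionH T μ P (n + 1) / (n + 1))

lemma entropyKS_eq_iSup_sigma (T : X → X) (μ : Measure X) :
    entropyKS T μ = ⨆ P : Σ k : ℕ, {P : X → Fin k // Measurable P},
      partitionEntropyRate T μ P.2.1 := by
  rw [entropyKS, iSup_sigma]
  exact iSup_congr fun k => by rw [iSup_subtype]; rfl

lemma partitionEntropyRate_le_of_factor (hT : Measurable T) (μ : Measure X)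
    [IsFiniteMeasure μ] {k r : ℕ} {R : X → Fin r} (hR : Measurable R) (π : Fin r → Fin k) :
    partitionEntropyRate T μ (π ∘ R) ≤ partitionEntropyRate T μ R :=
  iInf_mono fun n => ENNReal.ofReal_le_ofReal <|
    div_le_div_of_nonneg_right (partitionH_le_of_factor hT μ hR π _) (by positivity)

lemma partitionEntropyRate_combination_ge (μ ν : Measure X) [IsProbabilityMeasure μ]
    [IsProbabilityMeasure ν] {a b : ℝ≥0} (hab : a + b = 1) {k : ℕ} (P : X → Fin k) :
    a * partitionEntropyRate T μ P + b * partitionEntropyRate T ν P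
      ≤ partitionEntropyRate T ((a : ℝ≥0∞) • μ + (b : ℝ≥0∞) • ν) P := by
  refine le_iInf fun n => ?_
  have hμ := partitionH_nonneg (T := T) μ P (n + 1)
  have hν := partitionH_nonneg (T := T) ν P (n + 1)
  calc a * partitionEntropyRate T μ P + b * partitionEntropyRate T ν P
      ≤ a * ENNReal.ofReal (partitionH T μ P (n + 1) / (n + 1))
        + b * ENNReal.ofReal (partitionH T ν P (n + 1) / (n + 1)) := by
        gcongr <;> exact iInf_le _ n
    _ = ENNReal.ofReal
          ((a * partitionH T μ P (n + 1) + b * partitionH T ν P (n + 1)) / (n + 1)) := by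
        rw [← ENNReal.ofReal_coe_nnreal (p := a), ← ENNReal.ofReal_coe_nnreal (p := b),
          ← ENNReal.ofReal_mul a.coe_nonneg, ← ENNReal.ofReal_mul b.coe_nonneg,
          ← ENNReal.ofReal_add (by positivity) (by positivity), add_div, mul_div_assoc,
          mul_div_assoc]
    _ ≤ _ := ENNReal.ofReal_le_ofReal <|
        div_le_div_of_nonneg_right (partitionH_combination_ge μ ν hab P _) (by positivity)

lemma entropyKS_combination_ge (hT : Measurable T) (μ ν : Measure X) [IsProbabilityMeasure μ]
    [IsProbabilityMeasure ν] {a b : ℝ≥0} (hab : a + b = 1) :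
    a * entropyKS T μ + b * entropyKS T ν ≤ entropyKS T ((a : ℝ≥0∞) • μ + (b : ℝ≥0∞) • ν) := by
  have : Nonempty (Σ k : ℕ, {P : X → Fin k // Measurable P}) :=
    ⟨⟨1, fun _ => 0, measurable_const⟩⟩
  rw [entropyKS_eq_iSup_sigma, entropyKS_eq_iSup_sigma, ENNReal.mul_iSup, ENNReal.mul_iSup]
  refine ENNReal.iSup_add_iSup_le fun ⟨k, P, hP⟩ ⟨l, Q, hQ⟩ => ?_
  let R : X → Fin (k * l) := fun x => finProdFinEquiv (P x, Q x)
  have hR : Measurable R := Measurable.of_discrete.comp (hP.prodMk hQ)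
  have hPR : P = (fun i => (finProdFinEquiv.symm i).1) ∘ R := by
    funext x; simp only [R, Function.comp_apply, Equiv.symm_apply_apply]
  have hQR : Q = (fun i => (finProdFinEquiv.symm i).2) ∘ R := by
    funext x; simp only [R, Function.comp_apply, Equiv.symm_apply_apply]
  calc a * partitionEntropyRate T μ P + b * partitionEntropyRate T ν Q
      ≤ a * partitionEntropyRate T μ R + b * partitionEntropyRate T ν R := by
        rw [hPR, hQR]
        gcongr <;> exact partitionEntropyRate_le_of_factor hT _ hR _
    _ ≤ partitionEntropyRate T ((a : ℝ≥0∞) • μ + (b : ℝ≥0∞) • ν) R :=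
        partitionEntropyRate_combination_ge μ ν hab R
    _ ≤ _ := by
        rw [entropyKS_eq_iSup_sigma]
        exact le_iSup_of_le (⟨k * l, R, hR⟩ : Σ k : ℕ, {P : X → Fin k // Measurable P}) le_rfl

end PartitionEntropy

lemma EReal.min_le_of_convexCombination_le {a b : ℝ≥0} (hab : a + b = 1) (ha : 0 < a)
    (hb : 0 < b) {h₁ h₂ h : ℝ≥0∞} (hh : a * h₁ + b * h₂ ≤ h) (i₁ i₂ : ℝ) :
    min ((h₁ : EReal) + i₁) ((h₂ : EReal) + i₂)
      ≤ (h : EReal) + ((a * i₁ + b * i₂ : ℝ) : EReal) := by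
  rcases eq_or_ne h ⊤ with rfl | hfin
  · rw [EReal.coe_ennreal_top, EReal.top_add_coe]
    exact le_top
  lift h to ℝ≥0 using hfin
  have hfin₁ : h₁ ≠ ⊤ := fun h₁top => by simp [h₁top, ha.ne'] at hh
  have hfin₂ : h₂ ≠ ⊤ := fun h₂top => by simp [h₂top, hb.ne'] at hh
  lift h₁ to ℝ≥0 using hfin₁
  lift h₂ to ℝ≥0 using hfin₂
  have hh' : (a : ℝ) * h₁ + b * h₂ ≤ h := by exact_mod_cast hh
  have hab' : (a : ℝ) + b = 1 := by exact_mod_cast hab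
  simp only [EReal.coe_nnreal_eq_coe_real, ← EReal.coe_add, min_le_iff, EReal.coe_le_coe_iff]
  rcases le_total ((h₁ : ℝ) + i₁) (h₂ + i₂) with h12 | h21
  · left
    have : ((h₁ : ℝ) + i₁) = a * (h₁ + i₁) + b * (h₁ + i₁) := by rw [← add_mul, hab', one_mul]
    linarith [mul_le_mul_of_nonneg_left h12 b.coe_nonneg]
  · right
    have : ((h₂ : ℝ) + i₂) = a * (h₂ + i₂) + b * (h₂ + i₂) := by rw [← add_mul, hab', one_mul]
    linarith [mul_le_mul_of_nonneg_left h21 a.coe_nonneg]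

section FreeEnergy

variable {X : Type*} [MeasurableSpace X] {T : X → X}

noncomputable def freeEnergy (T : X → X) (φ : X → ℝ) (μ : ProbabilityMeasure X) : EReal :=
  (entropyKS T (μ : Measure X) : EReal) + ((∫ x, φ x ∂(μ : Measure X) : ℝ) : EReal)

lemma Lam_eq_biSup_freeEnergy {Y : Type*} (Ξ : ProbabilityMeasure X → Y) (φ : X → ℝ) (y : Y) :
    Lam T Ξ φ y = ⨆ μ ∈ {μ | InvMeas T μ ∧ Ξ μ = y}, freeEnergy T φ μ :=
  rfl

lemma coe_combPM {t : ℝ≥0} (ht : t ≤ 1) (μ ν : ProbabilityMeasure X) :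
    (combPM t ht μ ν : Measure X)
      = (t : ℝ≥0∞) • (μ : Measure X) + ((1 - t : ℝ≥0) : ℝ≥0∞) • (ν : Measure X) :=
  rfl

lemma InvMeas.combPM (hT : Measurable T) {t : ℝ≥0} (ht : t ≤ 1) {μ ν : ProbabilityMeasure X}
    (hμ : InvMeas T μ) (hν : InvMeas T ν) : InvMeas T (combPM t ht μ ν) := by
  rw [InvMeas, coe_combPM, Measure.map_add _ _ hT, Measure.map_smul, Measure.map_smul, hμ, hν]

lemma integral_combPM {t : ℝ≥0} (ht : t ≤ 1) {μ ν : ProbabilityMeasure X} {f : X → ℝ}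
    (hμ : Integrable f μ) (hν : Integrable f ν) :
    ∫ x, f x ∂(combPM t ht μ ν : Measure X)
      = t * ∫ x, f x ∂(μ : Measure X) + (1 - t : ℝ≥0) * ∫ x, f x ∂(ν : Measure X) := by
  rw [coe_combPM, integral_add_measure (hμ.smul_measure ENNReal.coe_ne_top)
    (hν.smul_measure ENNReal.coe_ne_top), integral_smul_measure, integral_smul_measure]
  rfl

lemma freeEnergy_combPM_ge [TopologicalSpace X] [CompactSpace X] [OpensMeasurableSpace X]
    (hT : Measurable T) {φ : X → ℝ} (hφ : Continuous φ) {t : ℝ≥0} (ht : t ≤ 1) (ht₀ : 0 < t)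
    (ht₁ : t < 1) (μ ν : ProbabilityMeasure X) :
    min (freeEnergy T φ μ) (freeEnergy T φ ν) ≤ freeEnergy T φ (combPM t ht μ ν) := by
  have hint : ∀ ρ : ProbabilityMeasure X, Integrable φ (ρ : Measure X) := fun ρ =>
    hφ.integrable_of_hasCompactSupport (HasCompactSupport.of_compactSpace φ)
  rw [freeEnergy, freeEnergy, freeEnergy, integral_combPM ht (hint μ) (hint ν)]
  exact EReal.min_le_of_convexCombination_le (add_tsub_cancel_of_le ht) ht₀ (tsub_pos_of_lt ht₁)
    (entropyKS_combination_ge hT μ ν (add_tsub_cancel_of_le ht)) _ _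

end FreeEnergy

lemma QuasiconcaveOn.biInf_convexHull_eq {𝕜 E β : Type*} [Semiring 𝕜] [PartialOrder 𝕜]
    [AddCommMonoid E] [Module 𝕜 E] [CompleteLattice β] {f : E → β}
    (hf : QuasiconcaveOn 𝕜 univ f) (C : Set E) :
    ⨅ y ∈ convexHull 𝕜 C, f y = ⨅ y ∈ C, f y := by
  refine le_antisymm (biInf_mono fun y hy => subset_convexHull 𝕜 C hy) (le_iInf₂ fun y hy => ?_)
  have hsub : convexHull 𝕜 C ⊆ {y ∈ univ | ⨅ y ∈ C, f y ≤ f y} :=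
    convexHull_min (fun y hy => ⟨trivial, iInf₂_le y hy⟩) (hf _)
  exact (hsub hy).2

section Lam

variable {X Y : Type*} [TopologicalSpace X] [CompactSpace X] [MeasurableSpace X]
  [OpensMeasurableSpace X] [AddCommGroup Y] [Module ℝ Y] {T : X → X}
  {Ξ : ProbabilityMeasure X → Y} {φ : X → ℝ}

lemma min_Lam_le_Lam_combination (hT : Measurable T) (hφ : Continuous φ)
    (hΞaff : ∀ (t : NNReal) (ht : t ≤ 1) (μ ν : ProbabilityMeasure X),
      Ξ (combPM t ht μ ν) = (t : ℝ) • Ξ μ + ((1 : ℝ) - (t : ℝ)) • Ξ ν)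
    {t : ℝ≥0} (ht₀ : 0 < t) (ht₁ : t < 1) (y₁ y₂ : Y) :
    min (Lam T Ξ φ y₁) (Lam T Ξ φ y₂) ≤ Lam T Ξ φ ((t : ℝ) • y₁ + ((1 : ℝ) - t) • y₂) := by
  simp only [Lam_eq_biSup_freeEnergy]
  refine le_of_forall_lt fun c hc => ?_
  obtain ⟨μ, hμ, hcμ⟩ := lt_biSup_iff.1 (hc.trans_le (min_le_left _ _))
  obtain ⟨ν, hν, hcν⟩ := lt_biSup_iff.1 (hc.trans_le (min_le_right _ _))
  have hmem : combPM t ht₁.le μ ν ∈ {ρ | InvMeas T ρ ∧ Ξ ρ = (t : ℝ) • y₁ + ((1 : ℝ) - t) • y₂} :=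
    ⟨hμ.1.combPM hT ht₁.le hν.1, by rw [hΞaff, hμ.2, hν.2]⟩
  calc c < min (freeEnergy T φ μ) (freeEnergy T φ ν) := lt_min hcμ hcν
    _ ≤ freeEnergy T φ (combPM t ht₁.le μ ν) := freeEnergy_combPM_ge hT hφ ht₁.le ht₀ ht₁ μ ν
    _ ≤ _ := le_biSup _ hmem

lemma quasiconcaveOn_Lam (hT : Measurable T) (hφ : Continuous φ)
    (hΞaff : ∀ (t : NNReal) (ht : t ≤ 1) (μ ν : ProbabilityMeasure X),
      Ξ (combPM t ht μ ν) = (t : ℝ) • Ξ μ + ((1 : ℝ) - (t : ℝ)) • Ξ ν) :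
    QuasiconcaveOn ℝ univ (Lam T Ξ φ) := by
  refine quasiconcaveOn_iff_min_le.2 ⟨convex_univ, fun y₁ _ y₂ _ a b ha hb hab => ?_⟩
  rcases ha.eq_or_lt with rfl | ha₀
  · simp [(zero_add b).symm.trans hab]
  rcases hb.eq_or_lt with rfl | hb₀
  · simp [(add_zero a).symm.trans hab]
  lift a to ℝ≥0 using ha
  have ha₁ : a < 1 := by rw [← NNReal.coe_lt_coe, NNReal.coe_one]; linarith
  obtain rfl : b = 1 - a := by linarith
  exact min_Lam_le_Lam_combination hT hφ hΞaff (NNReal.coe_pos.1 ha₀) ha₁ y₁ y₂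

end Lam

theorem iInf_Lam_convexHull_general
    {X Y : Type*} [MetricSpace X] [CompactSpace X] [MeasurableSpace X] [BorelSpace X]
    [AddCommGroup Y] [Module ℝ Y]
    (T : X → X) (hT : Continuous T)
    (Ξ : ProbabilityMeasure X → Y)
    (hΞaff : ∀ (t : NNReal) (ht : t ≤ 1) (μ ν : ProbabilityMeasure X),
      Ξ (combPM t ht μ ν) = (t : ℝ) • Ξ μ + ((1 : ℝ) - (t : ℝ)) • Ξ ν)
    (φ : X → ℝ) (hφ : Continuous φ) (C : Set Y) :
    ⨅ y ∈ C, Lam T Ξ φ y = ⨅ y ∈ (convexHull ℝ) C, Lam T Ξ φ y :=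
  ((quasiconcaveOn_Lam hT.measurable hφ hΞaff).biInf_convexHull_eq C).symm

/-- `inf_{y ∈ C} Λ(y,φ) = inf_{y ∈ co(C)} Λ(y,φ)` for a continuous affine
deformation `Ξ : M(X) → Y` into a vector space `Y` with a linearly compatible
metric, where `Λ(y,φ) = sup{ h(T,μ)+∫φ dμ : μ ∈ M(X,T), Ξμ = y }` (`-∞` if empty). -/
theorem iInf_Lam_convexHull
    {X Y : Type*} [MetricSpace X] [CompactSpace X] [MeasurableSpace X] [BorelSpace X]
    [AddCommGroup Y] [Module ℝ Y] [MetricSpace Y]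
    (hlin₁ : ∀ x₁ x₂ y₁ y₂ : Y, dist (x₁ + x₂) (y₁ + y₂) ≤ dist x₁ y₁ + dist x₂ y₂)
    (hlin₂ : ∀ (x y : Y) (l : ℝ), dist (l • x) (l • y) ≤ |l| * dist x y)
    (T : X → X) (hT : Continuous T)
    (Ξ : ProbabilityMeasure X → Y) (hΞcont : Continuous Ξ)
    (hΞaff : ∀ (t : NNReal) (ht : t ≤ 1) (μ ν : ProbabilityMeasure X),
      Ξ (combPM t ht μ ν) = (t : ℝ) • Ξ μ + ((1 : ℝ) - (t : ℝ)) • Ξ ν)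
    (φ : X → ℝ) (hφ : Continuous φ) (C : Set Y) :
    ⨅ y ∈ C, Lam T Ξ φ y = ⨅ y ∈ (convexHull ℝ) C, Lam T Ξ φ y :=
  iInf_Lam_convexHull_general T hT Ξ hΞaff φ hφ C
end

section
/- Let T: X → X be continuous on a compact metric space and ψ: X → ℝ a strictly positive continuous function. For any set Z ⊂ X, the BS-dimension BS(Z,ψ) is the unique root of Bowen's equation P(Z, −sψ) = 0 in s, i.e., P(Z, −sψ) = 0 if and only if s = BS(Z,ψ). -/
open MeasureTheory Filter Topology Set
open scoped ENNReal

noncomputable section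

/-- Birkhoff sum `S_m φ(x) = Σ_{i=0}^{m-1} φ(T^i x)`. -/
def birkhoffS {X : Type*} (T : X → X) (φ : X → ℝ) (m : ℕ) (x : X) : ℝ :=
  ∑ i ∈ Finset.range m, φ (T^[i] x)

/-- Bowen ball `B_m(x,ε) = {y : max_{0 ≤ i < m} D(T^i x, T^i y) ≤ ε}`, with respect
to a distance function `D`. -/
def bowenBallD {X : Type*} (D : X → X → ℝ) (T : X → X) (x : X) (m : ℕ) (ε : ℝ) : Set X :=
  {y | ∀ i < m, D (T^[i] x) (T^[i] y) ≤ ε}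

/-- `C` is an admissible (finite or countable) cover of `Z` by Bowen balls
`B_m(x,ε)` with `m ≥ n`. -/
def covOK {X : Type*} (D : X → X → ℝ) (T : X → X) (Z : Set X) (n : ℕ) (ε : ℝ)
    (C : Set (X × ℕ)) : Prop :=
  C.Countable ∧ (∀ p ∈ C, n ≤ p.2) ∧ Z ⊆ ⋃ p ∈ C, bowenBallD D T p.1 p.2 ε

/-- `M(Z,t,φ,n,ε) = inf_C Σ exp(-t m + sup_{y ∈ B_m(x,ε)} S_m φ(y))`. -/
def Mpre {X : Type*} (D : X → X → ℝ) (T : X → X) (Z : Set X) (t : ℝ) (φ : X → ℝ)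
    (n : ℕ) (ε : ℝ) : ℝ≥0∞ :=
  ⨅ (C : Set (X × ℕ)) (_ : covOK D T Z n ε C),
    ∑' p : C, ENNReal.ofReal
      (Real.exp (-t * ((p : X × ℕ).2 : ℝ) +
        sSup (birkhoffS T φ (p : X × ℕ).2 '' bowenBallD D T (p : X × ℕ).1 (p : X × ℕ).2 ε)))

/-- `M(Z,t,φ,ε) = lim_n M(Z,t,φ,n,ε)` (the quantity is nondecreasing in `n`). -/
def Mlim {X : Type*} (D : X → X → ℝ) (T : X → X) (Z : Set X) (t : ℝ) (φ : X → ℝ)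
    (ε : ℝ) : ℝ≥0∞ :=
  ⨆ n : ℕ, Mpre D T Z t φ n ε

/-- `P(Z,φ,ε)`: the critical value of `t ↦ M(Z,t,φ,ε)`. -/
def pressAt {X : Type*} (D : X → X → ℝ) (T : X → X) (Z : Set X) (φ : X → ℝ)
    (ε : ℝ) : EReal :=
  sInf {s : EReal | ∃ t : ℝ, s = (t : EReal) ∧ Mlim D T Z t φ ε = 0}

/-- The Pesin–Pitskel topological pressure `P(Z,φ) = lim_{ε → 0⁺} P(Z,φ,ε)`
of an arbitrary subset `Z`, with respect to a distance function `D`. -/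
def pressD {X : Type*} (D : X → X → ℝ) (T : X → X) (Z : Set X) (φ : X → ℝ) : EReal :=
  limsup (fun ε : ℝ => pressAt D T Z φ ε) (𝓝[>] 0)

/-- Topological pressure of a subset of a metric space. -/
def pressure {X : Type*} [MetricSpace X] (T : X → X) (Z : Set X) (φ : X → ℝ) : EReal :=
  pressD (fun a b => dist a b) T Z φ

/-- `N(Z,t,ψ,n,ε) = inf_C Σ exp(-t · sup_{y ∈ B_m(x,ε)} S_m ψ(y))`
(the BS-dimension Carathéodory sum). -/
def Npre {X : Type*} (D : X → X → ℝ) (T : X → X) (Z : Set X) (t : ℝ) (ψ : X → ℝ)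
    (n : ℕ) (ε : ℝ) : ℝ≥0∞ :=
  ⨅ (C : Set (X × ℕ)) (_ : covOK D T Z n ε C),
    ∑' p : C, ENNReal.ofReal
      (Real.exp (-t *
        sSup (birkhoffS T ψ (p : X × ℕ).2 '' bowenBallD D T (p : X × ℕ).1 (p : X × ℕ).2 ε)))

/-- `BS(Z,ψ,ε)`: critical value of `t ↦ lim_n N(Z,t,ψ,n,ε)`. -/
def BSat {X : Type*} (D : X → X → ℝ) (T : X → X) (Z : Set X) (ψ : X → ℝ)
    (ε : ℝ) : EReal :=
  sInf {s : EReal | ∃ t : ℝ, s = (t : EReal) ∧ (⨆ n : ℕ, Npre D T Z t ψ n ε) = 0}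

/-- The BS-dimension `BS(Z,ψ) = lim_{ε → 0⁺} BS(Z,ψ,ε)` of Barreira–Schmeling. -/
def BSdimD {X : Type*} (D : X → X → ℝ) (T : X → X) (Z : Set X) (ψ : X → ℝ) : EReal :=
  limsup (fun ε : ℝ => BSat D T Z ψ ε) (𝓝[>] 0)

/-- BS-dimension in a metric space. -/
def BSdim {X : Type*} [MetricSpace X] (T : X → X) (Z : Set X) (ψ : X → ℝ) : EReal :=
  BSdimD (fun a b => dist a b) T Z ψ

end

/-!
Fix `ε > 0` and compare the exponents of the two Carathéodory sums cover element by cover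
element. With `c ≤ ψ ≤ C`, raising `s` by `δ` lowers `P_ε(Z, -sψ)` by at least `δc` and at
most `δC`. Evaluating at the centre of a Bowen ball gives `exp (-s sup S_m ψ) ≤ exp (sup S_m(-sψ))`,
so `P_ε(Z, -sψ) < 0` forces `BS(Z, ψ, ε) ≤ s`. Conversely, once `ε` is below a modulus of
uniform continuity `γ` of `ψ`, Birkhoff sums oscillate by at most `2mγ` on `B_m(x, ε)`, and
`BS(Z, ψ, ε) < a < b` gives `P_ε(Z, -bψ) ≤ 2bγ - (b - a)c < 0`. In the limit `ε → 0`, the map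
`s ↦ P(Z, -sψ)` is therefore strictly decreasing, controlled from the right, negative to the
right of `BS(Z, ψ)` and positive to its left, so `BS(Z, ψ)` is its only zero.
-/

namespace Bowen

variable {X : Type*}

section Order

/-- The critical value `inf {t | Q t}`; it is `⊤` when no `t` satisfies `Q`. -/
noncomputable def critVal (Q : ℝ → Prop) : EReal :=
  sInf {s : EReal | ∃ t : ℝ, s = (t : EReal) ∧ Q t}

variable {Q Q' : ℝ → Prop} {t u : ℝ}

theorem critVal_le (h : Q t) : critVal Q ≤ t :=
  sInf_le ⟨t, rfl, h⟩

theorem of_critVal_lt (hQ : Monotone Q) (h : critVal Q < t) : Q t := by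
  obtain ⟨_, ⟨r, rfl, hr⟩, hrt⟩ := sInf_lt_iff.mp h
  exact hQ (EReal.coe_lt_coe_iff.mp hrt).le hr

theorem critVal_le_of_lt (hQ : Monotone Q) (h : critVal Q < t) (himp : Q t → Q' u) :
    critVal Q' ≤ u :=
  critVal_le (himp (of_critVal_lt hQ h))

theorem zero_le_critVal (h : ∀ t, Q t → 0 ≤ t) : 0 ≤ critVal Q :=
  le_sInf fun _ ⟨t, hs, ht⟩ => hs ▸ EReal.coe_nonneg.mpr (h t ht)

theorem critVal_eq_bot (h : ∀ t, Q t) : critVal Q = ⊥ :=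
  sInf_eq_bot.mpr fun _ hb => by
    obtain ⟨t, -, htb⟩ := EReal.exists_between_coe_real hb
    exact ⟨t, ⟨t, rfl, h t⟩, htb⟩

theorem limsup_le_of_limsup_lt {ι α : Type*} [CompleteLinearOrder α] {f g : ι → α}
    {l : Filter ι} {a b : α} (hf : limsup f l < a) (h : ∀ᶠ i in l, f i < a → g i ≤ b) :
    limsup g l ≤ b :=
  limsup_le_of_le (by isBoundedDefault)
    (((eventually_lt_of_limsup_lt hf).and h).mono fun _ hi => hi.2 hi.1)

theorem eventually_nonneg_nhdsGT_zero : ∀ᶠ ε : ℝ in 𝓝[>] 0, 0 ≤ ε :=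
  eventually_mem_nhdsWithin.mono fun _ hε => (mem_Ioi.1 hε).le

theorem eq_zero_iff_eq_of_crossing {F : ℝ → EReal} {β : EReal} {c C : ℝ} (hc : 0 < c)
    (hC : 0 < C) (hdec : ∀ a b t : ℝ, a ≤ b → F a < t → F b ≤ ↑(t - (b - a) * c))
    (hlip : ∀ a b t : ℝ, a ≤ b → F b < t → F a ≤ ↑(t + (b - a) * C))
    (hneg : ∀ s : ℝ, β < s → F s < 0) (hroot : ∀ s : ℝ, F s < 0 → β ≤ s) (s : ℝ) :
    F s = 0 ↔ (s : EReal) = β := by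
  constructor
  · intro hs
    refine le_antisymm (not_lt.1 fun hβs => (hneg s hβs).ne hs) (not_lt.1 fun hsβ => ?_)
    obtain ⟨u, hsu, huβ⟩ := EReal.exists_between_coe_real hsβ
    have hsu : s < u := EReal.coe_lt_coe_iff.1 hsu
    have hFu : F u ≤ ↑((u - s) * c / 2 - (u - s) * c) :=
      hdec s u _ hsu.le (hs ▸ EReal.coe_pos.2 (by positivity))
    have hFu : F u < 0 := hFu.trans_lt (EReal.coe_neg'.2 (by nlinarith))
    exact huβ.not_ge (hroot u hFu)
  · rintro rfl
    refine le_antisymm (not_lt.1 fun hpos => ?_) (not_lt.1 fun hneg' => ?_)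
    · obtain ⟨r, hr, hrF⟩ := EReal.exists_between_coe_real hpos
      have hr : 0 < r := EReal.coe_pos.1 hr
      obtain ⟨δ, hδ, hδC⟩ : ∃ δ > 0, δ * C = r / 2 := ⟨r / (2 * C), by positivity, by field_simp⟩
      have hFs : F s ≤ ↑(0 + (s + δ - s) * C) :=
        hlip s _ 0 (by linarith) (hneg _ (EReal.coe_lt_coe_iff.2 (by linarith)))
      exact (hrF.trans_le hFs).not_ge (EReal.coe_le_coe_iff.2 (by linarith))
    · obtain ⟨r, hFr, hr⟩ := EReal.exists_between_coe_real hneg'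
      have hr : r < 0 := EReal.coe_neg'.1 hr
      obtain ⟨δ, hδ, hδC⟩ : ∃ δ > 0, δ * C = -r / 2 :=
        ⟨-r / (2 * C), div_pos (by linarith) (by positivity), by field_simp⟩
      have hFs : F (s - δ) ≤ ↑(r + (s - (s - δ)) * C) := hlip _ s r (by linarith) hFr
      have := EReal.coe_le_coe_iff.1 (hroot _ (hFs.trans_lt (EReal.coe_neg'.2 (by linarith))))
      linarith

end Order

section Covers

variable (D : X → X → ℝ) (T : X → X) (Z : Set X) (ε : ℝ)

/-- `lim_n inf_C Σ_{(x,m) ∈ C} exp (f (x,m))` over admissible covers `C` of `Z`: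
both `Mlim` and the limit in `BSat` have this form. -/
noncomputable def coverLimit (f : X × ℕ → ℝ) : ℝ≥0∞ :=
  ⨆ n : ℕ, ⨅ (C : Set (X × ℕ)) (_ : covOK D T Z n ε C),
    ∑' p : C, ENNReal.ofReal (Real.exp (f p))

noncomputable def ballSup (φ : X → ℝ) (x : X) (m : ℕ) : ℝ :=
  sSup (birkhoffS T φ m '' bowenBallD D T x m ε)

theorem pressAt_eq_critVal (φ : X → ℝ) :
    pressAt D T Z φ ε =
      critVal fun t => coverLimit D T Z ε (fun p => -t * p.2 + ballSup D T ε φ p.1 p.2) = 0 :=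
  rfl

theorem BSat_eq_critVal (ψ : X → ℝ) :
    BSat D T Z ψ ε =
      critVal fun t => coverLimit D T Z ε (fun p => -t * ballSup D T ε ψ p.1 p.2) = 0 :=
  rfl

variable {D T Z ε} {f g : X × ℕ → ℝ} {φ φ' ψ : X → ℝ} {t u : ℝ}

theorem coverLimit_mono (h : f ≤ g) : coverLimit D T Z ε f ≤ coverLimit D T Z ε g :=
  iSup_mono fun _ => iInf₂_mono fun _ _ =>
    ENNReal.tsum_le_tsum fun p => ENNReal.ofReal_le_ofReal (Real.exp_le_exp.2 (h p))

theorem coverLimit_eq_zero_of_le (h : f ≤ g) (hg : coverLimit D T Z ε g = 0) :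
    coverLimit D T Z ε f = 0 :=
  nonpos_iff_eq_zero.mp (hg ▸ coverLimit_mono h)

theorem monotone_coverLimit_eq_zero {f : ℝ → X × ℕ → ℝ} (hf : Antitone f) :
    Monotone fun t => coverLimit D T Z ε (f t) = 0 :=
  fun _ _ hab => coverLimit_eq_zero_of_le (hf hab)

theorem one_le_coverLimit (hZ : Z.Nonempty) (hf : ∀ p, 0 ≤ f p) : 1 ≤ coverLimit D T Z ε f := by
  refine le_iSup_of_le 0 (le_iInf₂ fun C hC => ?_)
  obtain ⟨z, hz⟩ := hZ
  obtain ⟨p, hpC, -⟩ : ∃ p ∈ C, z ∈ bowenBallD D T p.1 p.2 ε := by simpa using hC.2.2 hz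
  calc 1 ≤ ENNReal.ofReal (Real.exp (f p)) := by simpa using Real.one_le_exp (hf p)
    _ ≤ _ := ENNReal.le_tsum (⟨p, hpC⟩ : C)

theorem coverLimit_empty : coverLimit D T ∅ ε f = 0 :=
  nonpos_iff_eq_zero.mp <| iSup_le fun n =>
    (iInf₂_le ∅ ⟨countable_empty, by simp, by simp⟩).trans (by simp)

theorem pressAt_le_of_pressAt_lt (h : pressAt D T Z φ ε < t)
    (hexp : ∀ x m, -u * m + ballSup D T ε φ' x m ≤ -t * m + ballSup D T ε φ x m) :
    pressAt D T Z φ' ε ≤ u := by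
  rw [pressAt_eq_critVal] at h ⊢
  refine critVal_le_of_lt (monotone_coverLimit_eq_zero fun a b hab p => ?_) h
    (coverLimit_eq_zero_of_le fun p => hexp p.1 p.2)
  nlinarith [(Nat.cast_nonneg p.2 : (0 : ℝ) ≤ p.2)]

theorem BSat_le_of_pressAt_lt (h : pressAt D T Z φ ε < t)
    (hexp : ∀ x m, -u * ballSup D T ε ψ x m ≤ -t * m + ballSup D T ε φ x m) :
    BSat D T Z ψ ε ≤ u := by
  rw [pressAt_eq_critVal] at h
  rw [BSat_eq_critVal]
  refine critVal_le_of_lt (monotone_coverLimit_eq_zero fun a b hab p => ?_) h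
    (coverLimit_eq_zero_of_le fun p => hexp p.1 p.2)
  nlinarith [(Nat.cast_nonneg p.2 : (0 : ℝ) ≤ p.2)]

theorem pressAt_le_of_BSat_lt (hψ : ∀ x m, 0 ≤ ballSup D T ε ψ x m) (h : BSat D T Z ψ ε < t)
    (hexp : ∀ x m, -u * m + ballSup D T ε φ x m ≤ -t * ballSup D T ε ψ x m) :
    pressAt D T Z φ ε ≤ u := by
  rw [BSat_eq_critVal] at h
  rw [pressAt_eq_critVal]
  refine critVal_le_of_lt (monotone_coverLimit_eq_zero fun a b hab p => ?_) h
    (coverLimit_eq_zero_of_le fun p => hexp p.1 p.2)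
  nlinarith [hψ p.1 p.2]

theorem zero_le_pressAt (hZ : Z.Nonempty) (hφ : ∀ x m, 0 ≤ ballSup D T ε φ x m) :
    0 ≤ pressAt D T Z φ ε := by
  rw [pressAt_eq_critVal]
  refine zero_le_critVal fun t ht => not_lt.1 fun ht0 => ?_
  have := (one_le_coverLimit hZ fun p => ?_).trans_eq ht
  · simp at this
  · nlinarith [hφ p.1 p.2, (Nat.cast_nonneg p.2 : (0 : ℝ) ≤ p.2)]

theorem zero_le_BSat (hZ : Z.Nonempty) (hψ : ∀ x m, 0 ≤ ballSup D T ε ψ x m) :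
    0 ≤ BSat D T Z ψ ε := by
  rw [BSat_eq_critVal]
  refine zero_le_critVal fun t ht => not_lt.1 fun ht0 => ?_
  have := (one_le_coverLimit hZ fun p => ?_).trans_eq ht
  · simp at this
  · nlinarith [hψ p.1 p.2]

theorem pressAt_empty : pressAt D T ∅ φ ε = ⊥ := by
  rw [pressAt_eq_critVal]
  exact critVal_eq_bot fun _ => coverLimit_empty

theorem BSat_empty : BSat D T ∅ ψ ε = ⊥ := by
  rw [BSat_eq_critVal]
  exact critVal_eq_bot fun _ => coverLimit_empty

end Covers

section BirkhoffSums

variable {T : X → X} {φ φ' : X → ℝ} {m : ℕ} {y : X} {c k : ℝ}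

theorem birkhoffS_const_mul (a : ℝ) (φ : X → ℝ) (m : ℕ) (y : X) :
    birkhoffS T (fun x => a * φ x) m y = a * birkhoffS T φ m y := by
  simp [birkhoffS, Finset.mul_sum]

theorem birkhoffS_le_add (h : ∀ x, φ x ≤ φ' x + k) :
    birkhoffS T φ m y ≤ birkhoffS T φ' m y + m * k := by
  simpa [birkhoffS, Finset.sum_add_distrib] using
    Finset.sum_le_sum fun i (_ : i ∈ Finset.range m) => h (T^[i] y)

theorem birkhoffS_le_mul (h : ∀ x, φ x ≤ c) : birkhoffS T φ m y ≤ m * c := by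
  simpa [birkhoffS] using Finset.sum_le_card_nsmul (Finset.range m) _ c fun i _ => h (T^[i] y)

theorem mul_le_birkhoffS (h : ∀ x, c ≤ φ x) : m * c ≤ birkhoffS T φ m y := by
  simpa [birkhoffS] using Finset.card_nsmul_le_sum (Finset.range m) _ c fun i _ => h (T^[i] y)

theorem bddAbove_range_birkhoffS (hφ : BddAbove (range φ)) :
    BddAbove (range (birkhoffS T φ m)) := by
  obtain ⟨c, hc⟩ := hφ
  exact ⟨m * c, forall_mem_range.2 fun _ => birkhoffS_le_mul fun x => hc (mem_range_self x)⟩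

end BirkhoffSums

section BowenBalls

variable [PseudoMetricSpace X] {T : X → X} {φ φ' : X → ℝ} {x y : X} {m : ℕ} {ε γ k r : ℝ}

theorem mem_bowenBallD_self (hε : 0 ≤ ε) : x ∈ bowenBallD dist T x m ε :=
  fun _ _ => by simpa using hε

theorem birkhoffS_le_ballSup (hφ : BddAbove (range φ)) (hy : y ∈ bowenBallD dist T x m ε) :
    birkhoffS T φ m y ≤ ballSup dist T ε φ x m :=
  le_csSup ((bddAbove_range_birkhoffS hφ).mono (image_subset_range _ _)) (mem_image_of_mem _ hy)

theorem ballSup_le (hε : 0 ≤ ε) (h : ∀ y ∈ bowenBallD dist T x m ε, birkhoffS T φ m y ≤ r) :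
    ballSup dist T ε φ x m ≤ r :=
  csSup_le ⟨_, mem_image_of_mem _ (mem_bowenBallD_self hε)⟩ (forall_mem_image.2 h)

theorem ballSup_nonneg (hφ : BddAbove (range φ)) (hε : 0 ≤ ε) (h : ∀ x, 0 ≤ φ x) :
    0 ≤ ballSup dist T ε φ x m :=
  (Finset.sum_nonneg fun _ _ => h _).trans (birkhoffS_le_ballSup hφ (mem_bowenBallD_self hε))

theorem ballSup_le_ballSup_add (hφ' : BddAbove (range φ')) (hε : 0 ≤ ε)
    (h : ∀ x, φ x ≤ φ' x + k) : ballSup dist T ε φ x m ≤ ballSup dist T ε φ' x m + m * k :=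
  ballSup_le hε fun _ hy =>
    (birkhoffS_le_add h).trans (add_le_add_left (birkhoffS_le_ballSup hφ' hy) _)

theorem ballSup_le_birkhoffS_add (hε : 0 ≤ ε)
    (hmod : ∀ a b, dist a b ≤ ε → φ a ≤ φ b + γ) :
    ballSup dist T ε φ x m ≤ birkhoffS T φ m x + m * γ :=
  ballSup_le hε fun y hy => by
    simpa [birkhoffS, Finset.sum_add_distrib] using Finset.sum_le_sum
      fun i (hi : i ∈ Finset.range m) =>
        hmod _ _ ((dist_comm _ _).trans_le (hy i (Finset.mem_range.1 hi)))

end BowenBalls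

section Potential

variable [PseudoMetricSpace X] [CompactSpace X] {T : X → X} {Z : Set X} {ψ : X → ℝ}
  {a b c C γ t ε : ℝ}

theorem bddAbove_range_const_mul (hψ : Continuous ψ) (a : ℝ) :
    BddAbove (range fun x => a * ψ x) :=
  (isCompact_range (continuous_const.mul hψ)).bddAbove

theorem pressAt_neg_mul_le_sub_of_lt (hψ : Continuous ψ) (hc : ∀ x, c ≤ ψ x) (hab : a ≤ b)
    (hε : 0 ≤ ε) (h : pressAt dist T Z (fun x => -a * ψ x) ε < t) :
    pressAt dist T Z (fun x => -b * ψ x) ε ≤ ↑(t - (b - a) * c) :=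
  pressAt_le_of_pressAt_lt h fun x m => by
    have := ballSup_le_ballSup_add (T := T) (x := x) (m := m) (φ := fun x => -b * ψ x)
      (k := -((b - a) * c))
      (bddAbove_range_const_mul hψ (-a)) hε fun y => by nlinarith [hc y]
    linarith

theorem pressAt_neg_mul_le_add_of_lt (hψ : Continuous ψ) (hC : ∀ x, ψ x ≤ C) (hab : a ≤ b)
    (hε : 0 ≤ ε) (h : pressAt dist T Z (fun x => -b * ψ x) ε < t) :
    pressAt dist T Z (fun x => -a * ψ x) ε ≤ ↑(t + (b - a) * C) :=
  pressAt_le_of_pressAt_lt h fun x m => by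
    have := ballSup_le_ballSup_add (T := T) (x := x) (m := m) (φ := fun x => -a * ψ x)
      (k := (b - a) * C)
      (bddAbove_range_const_mul hψ (-b)) hε fun y => by nlinarith [hC y]
    linarith

theorem BSat_le_of_pressAt_neg_mul_neg (hψ : Continuous ψ) (ha : 0 ≤ a) (hε : 0 ≤ ε)
    (h : pressAt dist T Z (fun x => -a * ψ x) ε < 0) : BSat dist T Z ψ ε ≤ a :=
  BSat_le_of_pressAt_lt (t := 0) (by rwa [EReal.coe_zero]) fun x m => by
    have hcenter := mem_bowenBallD_self (T := T) (x := x) (m := m) hε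
    have h₁ := birkhoffS_le_ballSup (isCompact_range hψ).bddAbove hcenter
    have h₂ := birkhoffS_le_ballSup (bddAbove_range_const_mul hψ (-a)) hcenter
    rw [birkhoffS_const_mul] at h₂
    nlinarith

theorem pressAt_neg_mul_le_of_BSat_lt (hψ : Continuous ψ) (hc : ∀ x, c ≤ ψ x) (hc0 : 0 ≤ c)
    (hmod : ∀ x y, dist x y ≤ ε → ψ x ≤ ψ y + γ) (hab : a ≤ b) (hb : 0 ≤ b) (hε : 0 ≤ ε)
    (h : BSat dist T Z ψ ε < a) :
    pressAt dist T Z (fun x => -b * ψ x) ε ≤ ↑(2 * b * γ - (b - a) * c) := by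
  have hbdd := (isCompact_range hψ).bddAbove
  refine pressAt_le_of_BSat_lt
    (fun x m => ballSup_nonneg hbdd hε fun y => hc0.trans (hc y)) h fun x m => ?_
  have hcenter := birkhoffS_le_ballSup (T := T) (m := m) hbdd (mem_bowenBallD_self (x := x) hε)
  have hlow : m * c ≤ birkhoffS T ψ m x := mul_le_birkhoffS hc
  have hψosc := ballSup_le_birkhoffS_add (T := T) (x := x) (m := m) hε hmod
  have hbψosc := ballSup_le_birkhoffS_add (T := T) (x := x) (m := m)
    (φ := fun x => -b * ψ x) (γ := b * γ) hε
    fun y z hyz => by nlinarith [hmod z y ((dist_comm z y).trans_le hyz)]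
  rw [birkhoffS_const_mul] at hbψosc
  nlinarith [mul_le_mul_of_nonneg_left hψosc hb, mul_le_mul_of_nonneg_left
    (hlow.trans hcenter) (sub_nonneg.2 hab)]

theorem zero_le_pressAt_neg_mul (hψ : Continuous ψ) (hψ0 : ∀ x, 0 ≤ ψ x) (ha : a ≤ 0)
    (hZ : Z.Nonempty) (hε : 0 ≤ ε) : 0 ≤ pressAt dist T Z (fun x => -a * ψ x) ε :=
  zero_le_pressAt hZ fun _ _ =>
    ballSup_nonneg (bddAbove_range_const_mul hψ (-a)) hε fun y => by nlinarith [hψ0 y]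

theorem zero_le_BSat_of_nonneg (hψ : Continuous ψ) (hψ0 : ∀ x, 0 ≤ ψ x) (hZ : Z.Nonempty)
    (hε : 0 ≤ ε) : 0 ≤ BSat dist T Z ψ ε :=
  zero_le_BSat hZ fun _ _ => ballSup_nonneg (isCompact_range hψ).bddAbove hε hψ0

theorem exists_forall_dist_le_le_add (hψ : Continuous ψ) (hγ : 0 < γ) :
    ∃ ε₀ > 0, ∀ x y, dist x y ≤ ε₀ → ψ x ≤ ψ y + γ := by
  obtain ⟨δ, hδ, hψδ⟩ :=
    Metric.uniformContinuous_iff.mp (CompactSpace.uniformContinuous_of_continuous hψ) γ hγ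
  refine ⟨δ / 2, half_pos hδ, fun x y hxy => ?_⟩
  have := hψδ (a := x) (b := y) (by linarith)
  rw [Real.dist_eq] at this
  linarith [le_abs_self (ψ x - ψ y)]

end Potential

section Limits

variable [MetricSpace X] {T : X → X} {Z : Set X} {ψ φ : X → ℝ} {a b c C t : ℝ}

theorem pressure_eq_limsup : pressure T Z φ = limsup (fun ε => pressAt dist T Z φ ε) (𝓝[>] 0) :=
  rfl

theorem BSdim_eq_limsup : BSdim T Z ψ = limsup (fun ε => BSat dist T Z ψ ε) (𝓝[>] 0) :=
  rfl

theorem pressure_empty : pressure T ∅ φ = ⊥ := by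
  simp [pressure_eq_limsup, pressAt_empty]

theorem BSdim_empty : BSdim T ∅ ψ = ⊥ := by
  simp [BSdim_eq_limsup, BSat_empty]

variable [CompactSpace X]

theorem pressure_neg_mul_le_sub_of_lt (hψ : Continuous ψ) (hc : ∀ x, c ≤ ψ x) (hab : a ≤ b)
    (h : pressure T Z (fun x => -a * ψ x) < t) :
    pressure T Z (fun x => -b * ψ x) ≤ ↑(t - (b - a) * c) :=
  limsup_le_of_limsup_lt h <| eventually_nonneg_nhdsGT_zero.mono fun _ hε =>
    pressAt_neg_mul_le_sub_of_lt hψ hc hab hε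

theorem pressure_neg_mul_le_add_of_lt (hψ : Continuous ψ) (hC : ∀ x, ψ x ≤ C) (hab : a ≤ b)
    (h : pressure T Z (fun x => -b * ψ x) < t) :
    pressure T Z (fun x => -a * ψ x) ≤ ↑(t + (b - a) * C) :=
  limsup_le_of_limsup_lt h <| eventually_nonneg_nhdsGT_zero.mono fun _ hε =>
    pressAt_neg_mul_le_add_of_lt hψ hC hab hε

theorem zero_le_BSdim (hψ : Continuous ψ) (hψ0 : ∀ x, 0 ≤ ψ x) (hZ : Z.Nonempty) :
    0 ≤ BSdim T Z ψ := by
  rw [BSdim_eq_limsup]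
  exact le_limsup_of_frequently_le (eventually_nonneg_nhdsGT_zero.mono fun _ hε =>
    zero_le_BSat_of_nonneg hψ hψ0 hZ hε).frequently

theorem BSdim_le_of_pressure_neg_mul_neg (hψ : Continuous ψ) (hψ0 : ∀ x, 0 ≤ ψ x)
    (hZ : Z.Nonempty) (h : pressure T Z (fun x => -a * ψ x) < 0) : BSdim T Z ψ ≤ a := by
  rcases lt_or_ge a 0 with ha | ha
  · rw [pressure_eq_limsup] at h
    refine absurd h (not_lt.2 (le_limsup_of_frequently_le ?_))
    exact (eventually_nonneg_nhdsGT_zero.mono fun _ hε =>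
      zero_le_pressAt_neg_mul hψ hψ0 ha.le hZ hε).frequently
  · exact limsup_le_of_limsup_lt h <| eventually_nonneg_nhdsGT_zero.mono fun _ hε =>
      BSat_le_of_pressAt_neg_mul_neg hψ ha hε

theorem pressure_neg_mul_neg_of_BSdim_lt (hψ : Continuous ψ) (hc : ∀ x, c ≤ ψ x) (hc0 : 0 < c)
    (hZ : Z.Nonempty) (h : BSdim T Z ψ < b) : pressure T Z (fun x => -b * ψ x) < 0 := by
  obtain ⟨a, hBa, hab⟩ := EReal.exists_between_coe_real h
  have hab : a < b := EReal.coe_lt_coe_iff.1 hab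
  have ha : 0 ≤ a :=
    EReal.coe_nonneg.1 ((zero_le_BSdim hψ (fun x => hc0.le.trans (hc x)) hZ).trans hBa.le)
  have hb : 0 < b := ha.trans_lt hab
  obtain ⟨γ, hγ, hbγ⟩ : ∃ γ > 0, 2 * b * γ = (b - a) * c / 2 :=
    ⟨(b - a) * c / (4 * b), by have := sub_pos.2 hab; positivity, by field_simp; ring⟩
  obtain ⟨ε₀, hε₀, hmod⟩ := exists_forall_dist_le_le_add hψ hγ
  have hle : pressure T Z (fun x => -b * ψ x) ≤ ↑(2 * b * γ - (b - a) * c) :=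
    limsup_le_of_limsup_lt hBa <| eventually_of_mem (Ioo_mem_nhdsGT hε₀) fun _ hε =>
      pressAt_neg_mul_le_of_BSat_lt hψ hc hc0.le (fun x y hxy => hmod x y (hxy.trans hε.2.le))
        hab.le (ha.trans hab.le) hε.1.le
  exact hle.trans_lt (EReal.coe_neg'.2 (by nlinarith))

end Limits

end Bowen

theorem BSdim_unique_root_of_bowen_general {X : Type*} [MetricSpace X] [CompactSpace X]
    (T : X → X) (ψ : X → ℝ) (hψ : Continuous ψ)
    (hpos : ∀ x, 0 < ψ x) (Z : Set X) (s : ℝ) :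
    pressure T Z (fun x => -s * ψ x) = 0 ↔ (s : EReal) = BSdim T Z ψ := by
  rcases Z.eq_empty_or_nonempty with rfl | hZ
  · simp [Bowen.pressure_empty, Bowen.BSdim_empty]
  obtain ⟨xc, -, hxc⟩ := isCompact_univ.exists_isMinOn ⟨hZ.some, mem_univ _⟩ hψ.continuousOn
  obtain ⟨xC, -, hxC⟩ := isCompact_univ.exists_isMaxOn ⟨hZ.some, mem_univ _⟩ hψ.continuousOn
  have hc : ∀ x, ψ xc ≤ ψ x := fun x => hxc (mem_univ x)
  have hC : ∀ x, ψ x ≤ ψ xC := fun x => hxC (mem_univ x)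
  exact Bowen.eq_zero_iff_eq_of_crossing (hpos xc) (hpos xC)
    (fun _ _ _ hab h => Bowen.pressure_neg_mul_le_sub_of_lt hψ hc hab h)
    (fun _ _ _ hab h => Bowen.pressure_neg_mul_le_add_of_lt hψ hC hab h)
    (fun _ h => Bowen.pressure_neg_mul_neg_of_BSdim_lt hψ hc (hpos xc) hZ h)
    (fun _ h => Bowen.BSdim_le_of_pressure_neg_mul_neg hψ (fun x => (hpos x).le) hZ h) s

/-- Bowen's equation: for strictly positive continuous `ψ`, the BS-dimension
`BS(Z,ψ)` is the unique root of `s ↦ P(Z, -sψ)`: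
`P(Z,-sψ) = 0 ↔ s = BS(Z,ψ)`. -/
theorem BSdim_unique_root_of_bowen {X : Type*} [MetricSpace X] [CompactSpace X]
    (T : X → X) (hT : Continuous T) (ψ : X → ℝ) (hψ : Continuous ψ)
    (hpos : ∀ x, 0 < ψ x) (Z : Set X) (s : ℝ) :
    pressure T Z (fun x => -s * ψ x) = 0 ↔ (s : EReal) = BSdim T Z ψ :=
  BSdim_unique_root_of_bowen_general T ψ hψ hpos Z s
end
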